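/- Assume the loss ℓ has values in [0,1]. Let δ > 0, p ∈ ℕ, and s(n,δ,p) = √( ln((1+n^{2p+1})/δ) / (2n) ). Then with probability at least 1 − δ in x ∼ μ^n, for all r ∈ ℝ: φ̂(r + s(n,δ,p), x) ≥ φ(r) − n^{−p} s(n,δ,p). -/

import Mathlib

open MeasureTheory Real Filter

noncomputable section

variable {H X : Type*} [MeasurableSpace H] [MeasurableSpace X]

/-- Empirical loss of hypothesis `h` on sample `x`. -/
def empLoss (ℓ : H → X → ℝ) (n : ℕ) (h : H) (x : Fin n → X) : ℝ :=
  (∑ i, ℓ h (x i)) / n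

/-- True (expected) loss of hypothesis `h`. -/
def trueLoss (ℓ : H → X → ℝ) (μ : Measure X) (h : H) : ℝ :=
  ∫ z, ℓ h z ∂μ

/-- Partition function of the Gibbs posterior. -/
def partitionZ (ℓ : H → X → ℝ) (pr : Measure H) (n : ℕ) (β : ℝ) (x : Fin n → X) : ℝ :=
  ∫ h, Real.exp (-β * empLoss ℓ n h x) ∂pr

/-- Gibbs posterior at inverse temperature `β`. -/
def gibbs (ℓ : H → X → ℝ) (pr : Measure H) (n : ℕ) (β : ℝ) (x : Fin n → X) : Measure H :=
  pr.withDensity fun h =>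
    ENNReal.ofReal (Real.exp (-β * empLoss ℓ n h x) / partitionZ ℓ pr n β x)

/-- Joint measure ρ of the sample and the Gibbs draw, on H × Xⁿ. -/
def jointRho (ℓ : H → X → ℝ) (μ : Measure X) (pr : Measure H) (n : ℕ) (β : ℝ) :
    Measure (H × (Fin n → X)) :=
  (Measure.pi fun _ : Fin n => μ).bind fun x => (gibbs ℓ pr n β x).map fun h => (h, x)

/-- Cumulative distribution function of the empirical loss under the prior. -/
def phiHat (ℓ : H → X → ℝ) (pr : Measure H) (n : ℕ) (r : ℝ) (x : Fin n → X) : ℝ :=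
  (pr {g | empLoss ℓ n g x ≤ r}).toReal

/-- Complexity measure Λ_β(h,x). -/
def Lam (ℓ : H → X → ℝ) (pr : Measure H) (n : ℕ) (β : ℝ) (h : H) (x : Fin n → X) : ℝ :=
  sInf {v : ℝ | ∃ r : ℝ, 0 < phiHat ℓ pr n (empLoss ℓ n h x + r) x ∧
    v = β * r + Real.log (1 / phiHat ℓ pr n (empLoss ℓ n h x + r) x)}

/-- Relative entropy of two Bernoulli variables. -/
def klBin (p q : ℝ) : ℝ :=
  p * Real.log (p / q) + (1 - p) * Real.log ((1 - p) / (1 - q))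

/-! For a fixed hypothesis `g`, Hoeffding's inequality bounds the probability that
`L̂(g, x) > L(g) + s` by `exp (-2 n s²)`. By Fubini the prior mass of such "bad" hypotheses has
expectation at most `exp (-2 n s²)`, so by Markov it is below `ε` except with probability
`exp (-2 n s²) / ε`. Outside that event, `{L ≤ r}` is covered by `{L̂ ≤ r + s}` and the bad set,
whence `φ(r) - ε ≤ φ̂(r + s, x)` for every `r`. For `s = s(n, δ, p)` and `ε = n⁻ᵖ s` we get
`exp (-2 n s²) = δ / (1 + n^(2p+1))` and `1 / (1 + n^(2p+1)) ≤ n⁻ᵖ s`, so the failure probability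
is at most `δ`. -/

open scoped ENNReal

open ProbabilityTheory in
lemma measure_mean_gt_integral_add_le (ν : Measure X) [IsProbabilityMeasure ν] {f : X → ℝ}
    (hf : Measurable f) (hf01 : ∀ z, f z ∈ Set.Icc (0 : ℝ) 1) {n : ℕ} (hn : 0 < n) {s : ℝ}
    (hs : 0 ≤ s) :
    (Measure.pi fun _ : Fin n => ν) {x | ∫ z, f z ∂ν + s < (∑ i, f (x i)) / n} ≤
      ENNReal.ofReal (exp (-(2 * n * s ^ 2))) := by
  set P := Measure.pi fun _ : Fin n => ν
  set m := ∫ z, f z ∂ν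
  have hsubG : ∀ i ∈ Finset.univ, HasSubgaussianMGF (fun x : Fin n → X => f (x i) - m)
      ((‖(1 : ℝ) - 0‖₊ / 2) ^ 2) P := fun i _ => by
    refine HasSubgaussianMGF.of_map (X := fun z => f z - m) (measurable_pi_apply i).aemeasurable ?_
    rw [(measurePreserving_eval _ i).map_eq]
    exact hasSubgaussianMGF_of_mem_Icc hf.aemeasurable (ae_of_all _ hf01)
  have hindep : iIndepFun (fun i (x : Fin n → X) => f (x i) - m) P :=
    iIndepFun_pi (X := fun _ z => f z - m) fun _ => (hf.sub_const m).aemeasurable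
  have hoeffding := HasSubgaussianMGF.measure_sum_ge_le_of_iIndepFun hindep hsubG
    (mul_nonneg (Nat.cast_nonneg n) hs)
  have hexponent : -(n * s) ^ 2 / (2 * ((∑ _i : Fin n, (‖(1 : ℝ) - 0‖₊ / 2) ^ 2 : NNReal) : ℝ))
      = -(2 * n * s ^ 2) := by
    simp only [sub_zero, nnnorm_one, Finset.sum_const, Finset.card_univ, Fintype.card_fin,
      nsmul_eq_mul]
    push_cast
    field_simp
  have hsub : {x : Fin n → X | m + s < (∑ i, f (x i)) / n} ⊆
      {x | n * s ≤ ∑ i, (f (x i) - m)} := by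
    intro x hx
    simp only [Set.mem_ofPred_eq, lt_div_iff₀ (by positivity : (0 : ℝ) < n), Finset.sum_sub_distrib, Finset.sum_const,
      Finset.card_univ, Fintype.card_fin, nsmul_eq_mul] at hx ⊢
    linarith
  calc P {x | m + s < (∑ i, f (x i)) / n} ≤ P {x | n * s ≤ ∑ i, (f (x i) - m)} := measure_mono hsub
    _ = ENNReal.ofReal (P.real {x | n * s ≤ ∑ i, (f (x i) - m)}) := (ofReal_measureReal).symm
    _ ≤ ENNReal.ofReal (exp (-(2 * n * s ^ 2))) := by
      rw [← hexponent]
      exact ENNReal.ofReal_le_ofReal hoeffding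

lemma measureReal_le_le_add_measureReal (pr : Measure H) [IsFiniteMeasure pr] (a b : H → ℝ)
    (r s : ℝ) :
    pr.real {g | a g ≤ r} ≤ pr.real {g | b g ≤ r + s} + pr.real {g | a g + s < b g} := by
  refine (measureReal_mono fun g (hg : a g ≤ r) => ?_).trans (measureReal_union_le _ _)
  by_contra! h
  simp only [Set.mem_union, Set.mem_ofPred_eq, not_or, not_le, not_lt] at h
  linarith [h.1, h.2]

lemma measure_le_measure_prodMk_preimage_le {Ω : Type*} [MeasurableSpace Ω] (P : Measure Ω)
    [SFinite P] (pr : Measure H) [IsProbabilityMeasure pr] {S : Set (Ω × H)}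
    (hS : MeasurableSet S) {η : ℝ≥0∞} (hη : ∀ g, P ((·, g) ⁻¹' S) ≤ η) {ε : ℝ≥0∞}
    (hε0 : ε ≠ 0) (hε : ε ≠ ∞) :
    P {x | ε ≤ pr (Prod.mk x ⁻¹' S)} ≤ η / ε := by
  have hmean : ∫⁻ x, pr (Prod.mk x ⁻¹' S) ∂P ≤ η :=
    calc ∫⁻ x, pr (Prod.mk x ⁻¹' S) ∂P = ∫⁻ g, P ((·, g) ⁻¹' S) ∂pr := by
          rw [← Measure.prod_apply hS, Measure.prod_apply_symm hS]
      _ ≤ ∫⁻ _, η ∂pr := lintegral_mono hη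
      _ = η := by simp
  exact (meas_ge_le_lintegral_div (measurable_measure_prodMk_left hS).aemeasurable hε0 hε).trans
    (ENNReal.div_le_div_right hmean ε)

def phi (ℓ : H → X → ℝ) (μ : Measure X) (pr : Measure H) (r : ℝ) : ℝ :=
  (pr {g | trueLoss ℓ μ g ≤ r}).toReal

lemma measurable_trueLoss {ℓ : H → X → ℝ} (hmeas : Measurable (Function.uncurry ℓ))
    (μ : Measure X) [SFinite μ] : Measurable (trueLoss ℓ μ) :=
  hmeas.stronglyMeasurable.integral_prod_right'.measurable

lemma measurable_empLoss {ℓ : H → X → ℝ} (hmeas : Measurable (Function.uncurry ℓ)) (n : ℕ) :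
    Measurable fun q : (Fin n → X) × H => empLoss ℓ n q.2 q.1 :=
  (Finset.measurable_sum _ fun i _ =>
    hmeas.comp (measurable_snd.prodMk ((measurable_pi_apply i).comp measurable_fst))).div_const _

lemma phi_sub_le_phiHat_add (ℓ : H → X → ℝ) (μ : Measure X) (pr : Measure H)
    [IsFiniteMeasure pr] {n : ℕ} {x : Fin n → X} {s ε : ℝ} (hε : 0 ≤ ε)
    (hx : pr {g | trueLoss ℓ μ g + s < empLoss ℓ n g x} ≤ ENNReal.ofReal ε) (r : ℝ) :
    phi ℓ μ pr r - ε ≤ phiHat ℓ pr n (r + s) x := by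
  have hsplit := measureReal_le_le_add_measureReal pr (trueLoss ℓ μ) (empLoss ℓ n · x) r s
  have hdev : pr.real {g | trueLoss ℓ μ g + s < empLoss ℓ n g x} ≤ ε :=
    ENNReal.toReal_le_of_le_ofReal hε hx
  exact sub_le_iff_le_add.2 (hsplit.trans (add_le_add_right hdev _))

theorem ofReal_one_sub_le_measure_forall_phi_sub_le_phiHat (μ : Measure X)
    [IsProbabilityMeasure μ] (pr : Measure H) [IsProbabilityMeasure pr] {ℓ : H → X → ℝ}
    (hmeas : Measurable (Function.uncurry ℓ)) (hrange : ∀ h z, ℓ h z ∈ Set.Icc (0 : ℝ) 1)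
    {n : ℕ} (hn : 0 < n) {s ε : ℝ} (hs : 0 ≤ s) (hε : 0 < ε) :
    ENNReal.ofReal (1 - exp (-(2 * n * s ^ 2)) / ε) ≤
      (Measure.pi fun _ : Fin n => μ)
        {x | ∀ r, phi ℓ μ pr r - ε ≤ phiHat ℓ pr n (r + s) x} := by
  set P := Measure.pi fun _ : Fin n => μ
  set S := {q : (Fin n → X) × H | trueLoss ℓ μ q.2 + s < empLoss ℓ n q.2 q.1}
  have hS : MeasurableSet S :=
    measurableSet_lt (((measurable_trueLoss hmeas μ).comp measurable_snd).add_const s)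
      (measurable_empLoss hmeas n)
  have hbad : P {x | ENNReal.ofReal ε ≤ pr (Prod.mk x ⁻¹' S)} ≤
      ENNReal.ofReal (exp (-(2 * n * s ^ 2)) / ε) := by
    rw [ENNReal.ofReal_div_of_pos hε]
    refine measure_le_measure_prodMk_preimage_le P pr hS (fun g => ?_)
      (ENNReal.ofReal_pos.2 hε).ne' ENNReal.ofReal_ne_top
    exact measure_mean_gt_integral_add_le μ (hmeas.comp measurable_prodMk_left) (hrange g) hn hs
  have hgood : {x | ENNReal.ofReal ε ≤ pr (Prod.mk x ⁻¹' S)}ᶜ ⊆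
      {x | ∀ r, phi ℓ μ pr r - ε ≤ phiHat ℓ pr n (r + s) x} := fun x hx =>
    phi_sub_le_phiHat_add ℓ μ pr hε.le (not_le.1 (show ¬ENNReal.ofReal ε ≤ _ from hx)).le
  calc ENNReal.ofReal (1 - exp (-(2 * n * s ^ 2)) / ε)
      = 1 - ENNReal.ofReal (exp (-(2 * n * s ^ 2)) / ε) := by
        rw [ENNReal.ofReal_sub _ (by positivity), ENNReal.ofReal_one]
    _ ≤ P {x | ENNReal.ofReal ε ≤ pr (Prod.mk x ⁻¹' S)}ᶜ := by
        rw [prob_compl_eq_one_sub (measurableSet_le measurable_const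
          (measurable_measure_prodMk_left hS))]
        exact tsub_le_tsub_left hbad 1
    _ ≤ _ := measure_mono hgood

def deviation (n : ℕ) (δ : ℝ) (p : ℕ) : ℝ :=
  Real.sqrt (Real.log ((1 + (n : ℝ) ^ (2 * p + 1)) / δ) / (2 * n))

section deviation

variable {n : ℕ} {δ : ℝ} (p : ℕ)

lemma one_half_le_log_one_add_pow_div (hn : 0 < n) (hδ : 0 < δ) (hδ1 : δ ≤ 1) :
    1 / 2 ≤ Real.log ((1 + (n : ℝ) ^ (2 * p + 1)) / δ) := by
  have hN : (2 : ℝ) ≤ 1 + (n : ℝ) ^ (2 * p + 1) := by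
    linarith [one_le_pow₀ (n := 2 * p + 1) (by exact_mod_cast hn : (1 : ℝ) ≤ n)]
  calc (1 : ℝ) / 2 ≤ Real.log 2 := by linarith [Real.log_two_gt_d9]
    _ ≤ Real.log (1 + (n : ℝ) ^ (2 * p + 1)) := Real.log_le_log (by norm_num) hN
    _ ≤ Real.log ((1 + (n : ℝ) ^ (2 * p + 1)) / δ) :=
      Real.log_le_log (by linarith) (le_div_self (by linarith) hδ hδ1)

lemma deviation_sq (hn : 0 < n) (hδ : 0 < δ) (hδ1 : δ ≤ 1) :
    deviation n δ p ^ 2 = Real.log ((1 + (n : ℝ) ^ (2 * p + 1)) / δ) / (2 * n) := by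
  refine Real.sq_sqrt (div_nonneg ?_ (by positivity))
  linarith [one_half_le_log_one_add_pow_div p hn hδ hδ1]

lemma exp_neg_two_mul_deviation_sq (hn : 0 < n) (hδ : 0 < δ) (hδ1 : δ ≤ 1) :
    exp (-(2 * n * deviation n δ p ^ 2)) = δ / (1 + (n : ℝ) ^ (2 * p + 1)) := by
  rw [deviation_sq p hn hδ hδ1, mul_div_cancel₀ _ (by positivity), exp_neg,
    exp_log (by positivity), inv_div]

lemma inv_one_add_pow_le_inv_pow_mul_deviation (hn : 0 < n) (hδ : 0 < δ) (hδ1 : δ ≤ 1) :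
    (1 + (n : ℝ) ^ (2 * p + 1))⁻¹ ≤ ((n : ℝ) ^ p)⁻¹ * deviation n δ p := by
  set N := (n : ℝ) ^ (2 * p + 1)
  have hlog := one_half_le_log_one_add_pow_div p hn hδ hδ1
  have hdev : (n : ℝ) ^ p / (1 + N) ≤ deviation n δ p := by
    refine Real.le_sqrt_of_sq_le ?_
    have hNn : ((n : ℝ) ^ p) ^ 2 * n = N := by ring
    rw [div_pow, div_le_div_iff₀ (by positivity) (by positivity)]
    -- `2N ≤ (1 + N)² log ((1 + N) / δ)` since `(1 + N)² ≥ 4N` and the logarithm is `≥ 1/2`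
    nlinarith [sq_nonneg (1 - N)]
  calc (1 + N)⁻¹ = ((n : ℝ) ^ p)⁻¹ * ((n : ℝ) ^ p / (1 + N)) := by field_simp
    _ ≤ ((n : ℝ) ^ p)⁻¹ * deviation n δ p := by gcongr

end deviation

theorem statement12
    (μ : Measure X) [IsProbabilityMeasure μ]
    (pr : Measure H) [IsProbabilityMeasure pr]
    (ℓ : H → X → ℝ) (hmeas : Measurable (Function.uncurry ℓ))
    (hrange : ∀ h z, ℓ h z ∈ Set.Icc (0 : ℝ) 1)
    (n : ℕ) (hn : 0 < n) (δ : ℝ) (hδ : 0 < δ) (p : ℕ) :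
    ENNReal.ofReal (1 - δ) ≤
      (Measure.pi fun _ : Fin n => μ) {x : Fin n → X | ∀ r : ℝ,
        (pr {g | trueLoss ℓ μ g ≤ r}).toReal
            - ((n : ℝ) ^ p)⁻¹ * Real.sqrt (Real.log ((1 + (n : ℝ) ^ (2 * p + 1)) / δ) / (2 * n)) ≤
          phiHat ℓ pr n
            (r + Real.sqrt (Real.log ((1 + (n : ℝ) ^ (2 * p + 1)) / δ) / (2 * n))) x} := by
  rcases le_or_gt δ 1 with hδ1 | hδ1
  · have hkey := inv_one_add_pow_le_inv_pow_mul_deviation p hn hδ hδ1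
    have hε : 0 < ((n : ℝ) ^ p)⁻¹ * deviation n δ p := lt_of_lt_of_le (by positivity) hkey
    have hfailure : exp (-(2 * n * deviation n δ p ^ 2)) / (((n : ℝ) ^ p)⁻¹ * deviation n δ p)
        ≤ δ := by
      rw [exp_neg_two_mul_deviation_sq p hn hδ hδ1, div_le_iff₀ hε, div_eq_mul_inv]
      exact mul_le_mul_of_nonneg_left hkey hδ.le
    exact (ENNReal.ofReal_le_ofReal (sub_le_sub_left hfailure 1)).trans
      (ofReal_one_sub_le_measure_forall_phi_sub_le_phiHat μ pr hmeas hrange hn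
        (Real.sqrt_nonneg _) hε)
  · rw [ENNReal.ofReal_of_nonpos (by linarith)]
    exact bot_le
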